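/- For every real number z with 0 < z < 1, ∑_{n=0}^∞ 4^n z^n / ((2n+1)·C_n) = 1/(2(1−z)) + (1/(2(1−z)^2)) · arctan(√(z/(1−z))) / √(z/(1−z)). -/

import Mathlib

open MeasureTheory intervalIntegral Set Real
open scoped Nat

lemma prod_fact (n : ℕ) : ∀ m : ℕ, n ! * ∏ j ∈ Finset.range m, (n + 1 + j) = (n + m)! := by
  intro m
  induction m with
  | zero => simp
  | succ m ih =>
    rw [Finset.prod_range_succ, ← mul_assoc, ih]
    rw [show n + (m+1) = (n + m) + 1 by ring, Nat.factorial_succ]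
    ring

lemma beta_nat (n : ℕ) : ∫ t in (0:ℝ)..1, t ^ n * (1 - t) ^ n
    = (n ! * n ! : ℝ) / (2 * n + 1)! := by
  have h := Complex.betaIntegral_eval_nat_add_one_right
    (u := (n : ℂ) + 1) (by simp; positivity) n
  rw [Complex.betaIntegral] at h
  have heq : (∫ x in (0:ℝ)..1, (x:ℂ) ^ ((n:ℂ) + 1 - 1) * (1 - (x:ℂ)) ^ ((n:ℂ) + 1 - 1))
      = ((∫ t in (0:ℝ)..1, t ^ n * (1 - t) ^ n : ℝ) : ℂ) := by
    rw [← intervalIntegral.integral_ofReal]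
    refine intervalIntegral.integral_congr fun x hx => ?_
    push_cast
    rw [add_sub_cancel_right, Complex.cpow_natCast, Complex.cpow_natCast]
  rw [heq] at h
  have hfne : (n ! : ℂ) ≠ 0 := by exact_mod_cast Nat.factorial_ne_zero n
  have hprod : (∏ j ∈ Finset.range (n + 1), ((n:ℂ) + 1 + (j:ℂ)))
      = ((2 * n + 1)! : ℂ) / (n ! : ℂ) := by
    have h2 := prod_fact n (n + 1)
    rw [show n + (n+1) = 2*n+1 by ring] at h2
    have : ((n ! * ∏ j ∈ Finset.range (n+1), (n + 1 + j) : ℕ) : ℂ) = ((2*n+1)! : ℂ) := by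
      exact_mod_cast congrArg (Nat.cast : ℕ → ℂ) h2
    push_cast at this
    field_simp
    linear_combination this
  rw [hprod] at h
  have hfne2 : ((2*n+1)! : ℂ) ≠ 0 := by exact_mod_cast Nat.factorial_ne_zero _
  have : ((∫ t in (0:ℝ)..1, t ^ n * (1 - t) ^ n : ℝ) : ℂ)
      = (((n ! * n ! : ℝ) / (2 * n + 1)! : ℝ) : ℂ) := by
    rw [h]
    push_cast
    field_simp
  exact_mod_cast this

lemma hasDerivAt_F (a b : ℝ) (ha : 0 < a) (hb : 0 < b) (t : ℝ) :
    HasDerivAt (fun t : ℝ => (t - 1/2) / (2*b*(a*(t - 1/2)^2 + b))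
        + Real.arctan ((t - 1/2) * Real.sqrt (a/b)) / (2*b*Real.sqrt (a*b)))
      (((a*(t - 1/2)^2 + b)^2)⁻¹) t := by
  set s1 := Real.sqrt (a/b) with hs1def
  set s2 := Real.sqrt (a*b) with hs2def
  have hs1 : s1^2 * b = a := by
    rw [hs1def, Real.sq_sqrt (by positivity)]; field_simp
  have hs12 : s1 * s2 = a := by
    rw [hs1def, hs2def, ← Real.sqrt_mul (by positivity)]
    rw [show a/b*(a*b) = a^2 * (b/b) by ring, div_self hb.ne', mul_one, Real.sqrt_sq ha.le]
  have hs2 : 0 < s2 := Real.sqrt_pos.mpr (by positivity)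
  have hs3 : b * s1 = s2 := by
    have hsq : (b * s1)^2 = a*b := by
      rw [mul_pow, hs1def, Real.sq_sqrt (by positivity : (0:ℝ) ≤ a/b)]
      field_simp
    rw [hs2def, ← hsq, Real.sqrt_sq (by positivity)]
  have hP : 0 < a*(t - 1/2)^2 + b := by positivity
  have hu : HasDerivAt (fun t : ℝ => t - 1/2) 1 t := (hasDerivAt_id t).sub_const _
  have hPd : HasDerivAt (fun t : ℝ => 2*b*(a*(t - 1/2)^2 + b))
      (2*b*(a*(2*(t-1/2)))) t := by
    have : HasDerivAt (fun t : ℝ => a*(t - 1/2)^2 + b) (a*(2*(t-1/2))) t := by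
      have := ((hu.fun_pow 2).const_mul a).add_const b
      refine this.congr_deriv ?_; ring
    exact this.const_mul (2*b)
  have h1 : HasDerivAt (fun t : ℝ => (t - 1/2) / (2*b*(a*(t - 1/2)^2 + b)))
      ((1*(2*b*(a*(t - 1/2)^2 + b)) - (t-1/2)*(2*b*(a*(2*(t-1/2)))))
        / (2*b*(a*(t - 1/2)^2 + b))^2) t := hu.div hPd (by positivity)
  have harg : HasDerivAt (fun t : ℝ => (t - 1/2) * s1) s1 t := by
    simpa using hu.mul_const s1
  have h2 : HasDerivAt (fun t : ℝ => Real.arctan ((t - 1/2) * s1) / (2*b*s2))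
      ((1 / (1 + ((t-1/2)*s1)^2) * s1) / (2*b*s2)) t := by
    exact ((Real.hasDerivAt_arctan _).comp t harg).div_const _
  have := h1.add h2
  refine this.congr_deriv (Eq.symm ?_)
  have hQ : 0 < 1 + ((t-1/2)*s1)^2 := by positivity
  set u := t - 1/2 with hudef
  field_simp
  rw [← hs3, ← hs1]
  ring

lemma integral_eval (a b : ℝ) (ha : 0 < a) (hb : 0 < b) (hab : a/4 + b = 1) :
    ∫ t in (0:ℝ)..1, ((a*(t - 1/2)^2 + b)^2)⁻¹
      = 1/(2*b) + Real.arctan (Real.sqrt (a/b)/2) / (b * Real.sqrt (a*b)) := by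
  have hs2 : 0 < Real.sqrt (a*b) := Real.sqrt_pos.mpr (by positivity)
  have hcont : Continuous fun t : ℝ => ((a*(t-1/2)^2+b)^2)⁻¹ := by
    refine Continuous.inv₀ (by fun_prop) fun t => by positivity
  rw [intervalIntegral.integral_eq_sub_of_hasDerivAt
    (fun t _ => hasDerivAt_F a b ha hb t) (hcont.intervalIntegrable _ _)]
  have e1 : a*((1:ℝ) - 1/2)^2 + b = 1 := by
    rw [show a*((1:ℝ) - 1/2)^2 + b = a/4 + b by ring, hab]
  have e0 : a*((0:ℝ) - 1/2)^2 + b = 1 := by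
    rw [show a*((0:ℝ) - 1/2)^2 + b = a/4 + b by ring, hab]
  rw [e1, e0]
  rw [show ((0:ℝ) - 1/2) * Real.sqrt (a/b) = -((1/2) * Real.sqrt (a/b)) by ring,
    Real.arctan_neg,
    show ((1:ℝ) - 1/2) * Real.sqrt (a/b) = Real.sqrt (a/b)/2 by ring,
    show ((1:ℝ)/2) * Real.sqrt (a/b) = Real.sqrt (a/b)/2 by ring]
  field_simp
  ring

lemma catalan_fact (n : ℕ) : (2*n+1) * ((n+1) * catalan n) * (n ! * n !) = (2*n+1)! := by
  rw [succ_mul_catalan_eq_centralBinom, Nat.centralBinom]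
  have h := Nat.choose_mul_factorial_mul_factorial (show n ≤ 2*n by omega)
  rw [show 2*n - n = n by omega] at h
  rw [mul_assoc, show (2*n).choose n * (n ! * n !) = (2*n)! by rw [← mul_assoc]; exact h,
    Nat.factorial_succ]

lemma catalan_pos' (n : ℕ) : 0 < catalan n := by
  rcases Nat.eq_zero_or_pos (catalan n) with h | h
  · exfalso
    have := succ_mul_catalan_eq_centralBinom n
    rw [h, mul_zero] at this
    exact Nat.centralBinom_ne_zero n this.symm
  · exact h

lemma term_eq (z : ℝ) (n : ℕ) :
    ∫ t in (0:ℝ)..1, ((n:ℝ)+1) * (4*z*t*(1-t))^n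
      = 4 ^ n * z ^ n / ((2 * (n : ℝ) + 1) * (catalan n : ℝ)) := by
  have hcongr : ∀ t ∈ uIcc (0:ℝ) 1, ((n:ℝ)+1) * (4*z*t*(1-t))^n
      = (((n:ℝ)+1) * (4*z)^n) * ((t*(1-t))^n) := fun t _ => by
    rw [show 4*z*t*(1-t) = (4*z)*(t*(1-t)) by ring, mul_pow]; ring
  have hbeta : ∫ t in (0:ℝ)..1, (t*(1-t))^n = (n ! * n ! : ℝ) / (2 * n + 1)! := by
    rw [← beta_nat n]
    exact intervalIntegral.integral_congr fun t _ => mul_pow t (1-t) n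
  rw [intervalIntegral.integral_congr hcongr, intervalIntegral.integral_const_mul, hbeta]
  have hcat : ((2*n+1)! : ℝ) = (2*(n:ℝ)+1) * (((n:ℝ)+1) * (catalan n : ℝ)) * ((n ! : ℝ) * (n ! : ℝ)) := by
    exact_mod_cast congrArg (Nat.cast : ℕ → ℝ) (catalan_fact n).symm
  rw [hcat]
  have h1 : (n ! : ℝ) ≠ 0 := by exact_mod_cast Nat.factorial_ne_zero n
  have h2 : (2*(n:ℝ)+1) ≠ 0 := by positivity
  have h3 : ((n:ℝ)+1) ≠ 0 := by positivity
  have h4 : (catalan n : ℝ) ≠ 0 := by exact_mod_cast (catalan_pos' n).ne'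
  field_simp
  ring

lemma hasSum_np1 {r : ℝ} (hr : |r| < 1) :
    HasSum (fun n : ℕ => ((n:ℝ)+1) * r^n) (((1-r)^2)⁻¹) := by
  have h1 : HasSum (fun n : ℕ => (n:ℝ) * r^n) (r/(1-r)^2) :=
    hasSum_coe_mul_geometric_of_norm_lt_one (by rwa [Real.norm_eq_abs])
  have h2 : HasSum (fun n : ℕ => r^n) ((1-r)⁻¹) :=
    hasSum_geometric_of_norm_lt_one (by rwa [Real.norm_eq_abs])
  have h := h1.add h2
  have hne : (1:ℝ) - r ≠ 0 := by
    intro h'; rw [sub_eq_zero] at h'; rw [← h'] at hr; simp at hr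
  convert h using 1
  · ext n; ring
  · field_simp
    ring

/-- For `0 < z < 1`,
`∑_{n=0}^∞ 4^n z^n / ((2n+1)·C_n)
  = 1/(2(1-z)) + (1/(2(1-z)^2)) · arctan(√(z/(1-z))) / √(z/(1-z))`. -/
theorem g_zero_closed_form (z : ℝ) (hz0 : 0 < z) (hz1 : z < 1) :
    ∑' n : ℕ, 4 ^ n * z ^ n / ((2 * (n : ℝ) + 1) * (catalan n : ℝ))
      = 1 / (2 * (1 - z))
        + 1 / (2 * (1 - z) ^ 2)
          * (Real.arctan (Real.sqrt (z / (1 - z))) / Real.sqrt (z / (1 - z))) := by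
  have hb : (0:ℝ) < 1 - z := by linarith
  set μ := volume.restrict (Ioc (0:ℝ) 1) with hμ
  set F : ℕ → ℝ → ℝ := fun n t => ((n:ℝ)+1) * (4*z*t*(1-t))^n with hFdef
  have hFc : ∀ n, Continuous (F n) := fun n => by fun_prop
  have hInt : ∀ n, Integrable (F n) μ := fun n => (hFc n).integrableOn_Ioc
  have hval : ∀ n, ∫ t, F n t ∂μ = 4 ^ n * z ^ n / ((2 * (n : ℝ) + 1) * (catalan n : ℝ)) := by
    intro n
    rw [show (∫ t, F n t ∂μ) = ∫ t in Ioc (0:ℝ) 1, F n t from rfl,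
      ← intervalIntegral.integral_of_le zero_le_one]
    exact term_eq z n
  have hnn : ∀ n, ∀ t ∈ Ioc (0:ℝ) 1, 0 ≤ F n t := by
    intro n t ht
    have h1 : 0 ≤ 4*z*t*(1-t) := by
      nlinarith [mul_nonneg (mul_pos hz0 ht.1).le (sub_nonneg.mpr ht.2)]
    positivity
  have hnormval : ∀ n, ∫ t, ‖F n t‖ ∂μ
      = 4 ^ n * z ^ n / ((2 * (n : ℝ) + 1) * (catalan n : ℝ)) := by
    intro n
    rw [← hval n]
    refine setIntegral_congr_fun measurableSet_Ioc fun t ht => ?_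
    exact Real.norm_of_nonneg (hnn n t ht)
  have hcatpos : ∀ n : ℕ, (0:ℝ) < (catalan n : ℝ) := fun n => by
    exact_mod_cast catalan_pos' n
  have hkey : ∀ n : ℕ, (4:ℝ)^n ≤ (2*(n:ℝ)+1) * (((n:ℝ)+1) * (catalan n : ℝ)) := by
    intro n
    have hn : 4^n ≤ (2*n+1) * ((n+1) * catalan n) := by
      rw [succ_mul_catalan_eq_centralBinom]
      rcases Nat.eq_zero_or_pos n with h | h
      · subst h; simp [Nat.centralBinom]
      · calc 4^n ≤ 2*n * n.centralBinom := Nat.four_pow_le_two_mul_self_mul_centralBinom n h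
          _ ≤ (2*n+1) * n.centralBinom := by
              exact Nat.mul_le_mul_right _ (by omega)
    exact_mod_cast hn
  have hSum : Summable fun n => ∫ t, ‖F n t‖ ∂μ := by
    simp_rw [hnormval]
    refine Summable.of_nonneg_of_le (fun n => by positivity) (fun n => ?_)
      (hasSum_np1 (r := z) (by rw [abs_of_nonneg hz0.le]; exact hz1)).summable
    rw [div_le_iff₀ (mul_pos (by positivity) (hcatpos n))]
    have hzn : (0:ℝ) ≤ z^n := by positivity
    calc (4:ℝ)^n * z^n = z^n * 4^n := by ring
      _ ≤ z^n * ((2*(n:ℝ)+1) * (((n:ℝ)+1) * (catalan n : ℝ))) :=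
          mul_le_mul_of_nonneg_left (hkey n) hzn
      _ = ((n:ℝ)+1) * z^n * ((2*(n:ℝ)+1) * (catalan n : ℝ)) := by ring
  have hsum := MeasureTheory.hasSum_integral_of_summable_integral_norm hInt hSum
  have hlhs : (∑' n : ℕ, 4 ^ n * z ^ n / ((2 * (n : ℝ) + 1) * (catalan n : ℝ)))
      = ∫ t, (∑' n, F n t) ∂μ := by
    rw [← hsum.tsum_eq]
    exact tsum_congr fun n => (hval n).symm
  rw [hlhs]
  have hptwise : ∀ t ∈ Ioc (0:ℝ) 1,
      (∑' n, F n t) = (((4*z*(t - 1/2)^2 + (1-z))^2)⁻¹) := by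
    intro t ht
    have h1 : 0 ≤ 4*z*t*(1-t) := by
      nlinarith [mul_nonneg (mul_pos hz0 ht.1).le (sub_nonneg.mpr ht.2)]
    have h2 : 4*z*t*(1-t) < 1 := by nlinarith [sq_nonneg (2*t-1), ht.1, ht.2]
    have habs : |4*z*t*(1-t)| < 1 := by rwa [abs_of_nonneg h1]
    rw [(hasSum_np1 habs).tsum_eq]
    rw [show 1 - 4*z*t*(1-t) = 4*z*(t - 1/2)^2 + (1-z) by ring]
  rw [show (∫ t, (∑' n, F n t) ∂μ) = ∫ t in Ioc (0:ℝ) 1, (∑' n, F n t) from rfl,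
    setIntegral_congr_fun measurableSet_Ioc hptwise,
    ← intervalIntegral.integral_of_le zero_le_one,
    integral_eval (4*z) (1-z) (by positivity) hb (by ring)]
  -- final arithmetic
  set s := Real.sqrt (z / (1 - z)) with hsdef
  have hspos : 0 < s := Real.sqrt_pos.mpr (by positivity)
  have hA : Real.sqrt (4*z/(1-z)) / 2 = s := by
    rw [show 4*z/(1-z) = 4*(z/(1-z)) by ring,
      Real.sqrt_mul (by norm_num : (0:ℝ) ≤ 4),
      show Real.sqrt 4 = 2 by
        rw [show (4:ℝ) = 2^2 by norm_num, Real.sqrt_sq (by norm_num)]]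
    ring
  have hB : Real.sqrt (4*z*(1-z)) = 2*(1-z)*s := by
    rw [← Real.sqrt_sq (show (0:ℝ) ≤ 2*(1-z)*s by positivity)]
    congr 1
    rw [mul_pow, mul_pow, hsdef, Real.sq_sqrt (by positivity)]
    field_simp
    ring
  rw [hA, hB]
  field_simp
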